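/- arXiv:1902.05926 — 3 statements merged into one kernel-verified Lean document; each statement's English description precedes it below -/
import Mathlib

section
/- Let X be a Hausdorff CoPolish space that is Fréchet–Urysohn. Then the set X_ω = {x ∈ X | the neighborhood filter of x is countably generated (x has a countable neighborhood basis)} is open in X. -/
/-!
In a CoPolish space `X = ⋃ Kₙ`, a point has a countable neighbourhood basis exactly when
it is an interior point of some `Kₙ`, so the set of such points is `⋃ₙ interior Kₙ`.
One inclusion holds because each `Kₙ` is metrizable. For the other, if `x ∈ K_N` has a
countable neighbourhood basis `(Uₘ)` but no `Kₘ` is a neighbourhood of `x`, pick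
`yₘ ∈ Uₘ \ Kₘ`. Then `{yₘ | m ≥ N}` meets every `Kₙ` in a finite set, so it is closed in
the direct limit topology; it accumulates at `x`, hence contains `x`, although
`yₘ ∉ Kₘ ⊇ K_N ∋ x` for `m ≥ N`.
-/

/-- A topological space is CoPolish if it is the direct limit of a monotone sequence of
compact metrizable subspaces. -/
def CoPolish (X : Type*) [TopologicalSpace X] : Prop :=
  ∃ K : ℕ → Set X, Monotone K ∧ (∀ n, IsCompact (K n)) ∧
    (∀ n, TopologicalSpace.MetrizableSpace (K n)) ∧
    (⋃ n, K n) = Set.univ ∧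
    ∀ U : Set X, IsOpen U ↔ ∀ n, IsOpen ((Subtype.val : K n → X) ⁻¹' U)

open Filter Topology TopologicalSpace Set

theorem isCountablyGenerated_nhds_of_mem_nhds {X : Type*} [TopologicalSpace X] {s : Set X}
    [FirstCountableTopology s] {x : X} (hs : s ∈ 𝓝 x) : (𝓝 x).IsCountablyGenerated := by
  rw [← nhdsWithin_eq_nhds.2 hs, ← map_nhds_subtype_val ⟨x, mem_of_mem_nhds hs⟩]
  infer_instance

section DirectLimit

variable {X : Type*} [TopologicalSpace X] {K : ℕ → Set X}

theorem isClosed_of_forall_finite_inter [∀ n, T1Space (K n)]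
    (hK : ∀ U : Set X, (∀ n, IsOpen ((↑) ⁻¹' U : Set (K n))) → IsOpen U)
    {A : Set X} (hA : ∀ n, (A ∩ K n).Finite) : IsClosed A := by
  rw [← isOpen_compl_iff]
  refine hK _ fun n => ?_
  rw [preimage_compl, isOpen_compl_iff]
  refine (Finite.of_finite_image ?_ Subtype.val_injective.injOn).isClosed
  simpa only [Subtype.image_preimage_coe, inter_comm] using hA n

theorem exists_mem_nhds_of_isCountablyGenerated [∀ n, T1Space (K n)] (hmono : Monotone K)
    (hcover : ⋃ n, K n = univ)
    (hK : ∀ U : Set X, (∀ n, IsOpen ((↑) ⁻¹' U : Set (K n))) → IsOpen U)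
    {x : X} [(𝓝 x).IsCountablyGenerated] : ∃ n, K n ∈ 𝓝 x := by
  by_contra! hx
  obtain ⟨U, hU⟩ := (𝓝 x).exists_antitone_basis
  obtain ⟨N, hxN⟩ := mem_iUnion.1 (hcover ▸ mem_univ x)
  have hy : ∀ m, ∃ y, y ∈ U m ∧ y ∉ K m := fun m => by
    by_contra! h
    exact hx m (mem_of_superset (hU.mem m) h)
  choose y hyU hyK using hy
  have hyK_lt : ∀ {m n}, y m ∈ K n → m < n := fun h => by
    by_contra! hle
    exact hyK _ (hmono hle h)
  have hclosed : IsClosed (y '' Ici N) := by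
    refine isClosed_of_forall_finite_inter hK fun n => ((finite_Iio n).image y).subset ?_
    rintro _ ⟨⟨m, -, rfl⟩, hm⟩
    exact mem_image_of_mem y (hyK_lt hm)
  have hx_mem : x ∈ y '' Ici N :=
    hclosed.mem_of_tendsto (hU.tendsto hyU)
      (eventually_ge_atTop N |>.mono fun m hm => ⟨m, hm, rfl⟩)
  obtain ⟨m, hm, rfl⟩ := hx_mem
  exact hyK m (hmono hm hxN)

theorem setOf_isCountablyGenerated_nhds_eq_iUnion_interior
    [∀ n, MetrizableSpace (K n)] (hmono : Monotone K) (hcover : ⋃ n, K n = univ)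
    (hK : ∀ U : Set X, (∀ n, IsOpen ((↑) ⁻¹' U : Set (K n))) → IsOpen U) :
    {x : X | (𝓝 x).IsCountablyGenerated} = ⋃ n, interior (K n) := by
  ext x
  simp only [mem_ofPred_eq, mem_iUnion, mem_interior_iff_mem_nhds]
  constructor
  · intro _
    exact exists_mem_nhds_of_isCountablyGenerated hmono hcover hK
  · rintro ⟨n, hn⟩
    exact isCountablyGenerated_nhds_of_mem_nhds hn

end DirectLimit

theorem isOpen_countablyGenerated_of_coPolish_general {X : Type*} [TopologicalSpace X] (h : CoPolish X) :
    IsOpen {x : X | (nhds x).IsCountablyGenerated} := by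
  obtain ⟨K, hmono, -, hmetr, hcover, hopen⟩ := h
  rw [setOf_isCountablyGenerated_nhds_eq_iUnion_interior hmono hcover fun U => (hopen U).2]
  exact isOpen_iUnion fun n => isOpen_interior

/-- In a Hausdorff Fréchet–Urysohn CoPolish space, the set of points with a countable
neighbourhood basis is open. -/
theorem isOpen_countablyGenerated_of_coPolish {X : Type*} [TopologicalSpace X] [T2Space X]
    [FrechetUrysohnSpace X] (h : CoPolish X) :
    IsOpen {x : X | (nhds x).IsCountablyGenerated} :=
  isOpen_countablyGenerated_of_coPolish_general h
end

section
/- Let X be a Fréchet–Urysohn topological space, let (A_n) be a sequence of nonempty closed subsets of X, and let A_∞ be a nonempty closed subset of X. Then the following are equivalent: (i) (A_n) converges to A_∞ in the lower Vietoris sense, i.e. for every open U ⊆ X with U ∩ A_∞ ≠ ∅ one has U ∩ A_n ≠ ∅ for all sufficiently large n; (ii) for every x_∞ ∈ A_∞ and every strictly increasing φ : ℕ → ℕ there exist a sequence (x_n) in X converging to x_∞ and a strictly increasing ξ : ℕ → ℕ with x_n ∈ A_{φ(ξ n)} for all n ∈ ℕ. -/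
/-!
If `U ∩ A n = ∅` for infinitely many `n`, enumerating those `n` by `φ` gives a sequence that
converges into `U` yet avoids it. Conversely, lower convergence puts `x∞` in the closure of every
tail union `⋃ n ≥ N, A (φ n)`. Either `x∞ ∈ A (φ n)` infinitely often, and a constant sequence
works, or the Fréchet–Urysohn property gives `y j → x∞` with `y j ∈ A (φ (m j))`; since the
`A n` are closed and miss `x∞`, every index is hit finitely often, so `m j → ∞` and a subsequence
has strictly increasing indices.
-/

open Filter Topology

section

variable {X : Type*} [TopologicalSpace X]

theorem tendsto_atTop_of_tendsto_of_mem_of_notMem {F : ℕ → Set X} (hF : ∀ k, IsClosed (F k))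
    {y : ℕ → X} {x : X} (hy : Tendsto y atTop (𝓝 x)) {m : ℕ → ℕ}
    (hym : ∀ j, y j ∈ F (m j)) (hx : ∀ j, x ∉ F (m j)) : Tendsto m atTop atTop := by
  rw [← Nat.cofinite_eq_atTop]
  refine Tendsto.cofinite_of_finite_preimage_singleton fun k => Set.finite_coe_iff.2 ?_
  by_contra hinf
  have hfreq : ∃ᶠ j in atTop, m j = k := Nat.frequently_atTop_iff_infinite.2 hinf
  obtain ⟨j, rfl⟩ := hfreq.exists
  exact hx j <| (hF _).mem_of_frequently_of_tendsto (hfreq.mono fun i hi => hi ▸ hym i) hy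

theorem exists_seq_tendsto_of_frequently_inter_nonempty [FrechetUrysohnSpace X]
    {A : ℕ → Set X} (hA : ∀ n, IsClosed (A n)) {x : X}
    (hx : ∀ U, IsOpen U → x ∈ U → ∃ᶠ n in atTop, (U ∩ A n).Nonempty) :
    ∃ (x' : ℕ → X) (ξ : ℕ → ℕ), StrictMono ξ ∧ Tendsto x' atTop (𝓝 x) ∧
      ∀ n, x' n ∈ A (ξ n) := by
  by_cases hmem : ∃ᶠ n in atTop, x ∈ A n
  · obtain ⟨ξ, hξ, hxA⟩ := extraction_of_frequently_atTop hmem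
    exact ⟨fun _ => x, ξ, hξ, tendsto_const_nhds, hxA⟩
  obtain ⟨N, hN⟩ := eventually_atTop.mp (not_frequently.mp hmem)
  have hclosure : x ∈ closure (⋃ n ≥ N, A n) := by
    refine mem_closure_iff.2 fun U hU hxU => ?_
    obtain ⟨n, hn, y, hyU, hyA⟩ := frequently_atTop.mp (hx U hU hxU) N
    exact ⟨y, hyU, Set.mem_biUnion hn hyA⟩
  obtain ⟨y, hyA, hy⟩ := mem_closure_iff_seq_limit.mp hclosure
  simp only [Set.mem_iUnion, exists_prop] at hyA
  choose m hmN hym using hyA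
  have hm : Tendsto m atTop atTop :=
    tendsto_atTop_of_tendsto_of_mem_of_notMem hA hy hym fun j => hN _ (hmN j)
  obtain ⟨g, hg, hmg⟩ := strictMono_subseq_of_tendsto_atTop hm
  exact ⟨y ∘ g, m ∘ g, hmg, hy.comp hg.tendsto_atTop, fun n => hym (g n)⟩

theorem eventually_inter_nonempty_of_forall_strictMono {A : ℕ → Set X} {x : X}
    (hx : ∀ φ : ℕ → ℕ, StrictMono φ → ∃ (x' : ℕ → X) (ξ : ℕ → ℕ), StrictMono ξ ∧
      Tendsto x' atTop (𝓝 x) ∧ ∀ n, x' n ∈ A (φ (ξ n)))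
    {U : Set X} (hU : U ∈ 𝓝 x) : ∀ᶠ n in atTop, (U ∩ A n).Nonempty := by
  by_contra hfreq
  obtain ⟨φ, hφ, hempty⟩ := extraction_of_frequently_atTop (not_eventually.mp hfreq)
  obtain ⟨x', ξ, -, hx', hx'A⟩ := hx φ hφ
  obtain ⟨n, hn⟩ := (hx'.eventually_mem hU).exists
  exact hempty (ξ n) ⟨x' n, hn, hx'A n⟩

end

theorem lowerVietoris_convergence_iff_frechetUrysohn_general
    {X : Type*} [TopologicalSpace X] [FrechetUrysohnSpace X]
    (A : ℕ → Set X) (Ainf : Set X)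
    (hAc : ∀ n, IsClosed (A n)) :
    (∀ U : Set X, IsOpen U → (U ∩ Ainf).Nonempty →
      ∃ N : ℕ, ∀ n, N ≤ n → (U ∩ A n).Nonempty) ↔
    (∀ x ∈ Ainf, ∀ φ : ℕ → ℕ, StrictMono φ →
      ∃ (x' : ℕ → X) (ξ : ℕ → ℕ), StrictMono ξ ∧
        Filter.Tendsto x' Filter.atTop (nhds x) ∧
        ∀ n : ℕ, x' n ∈ A (φ (ξ n))) := by
  constructor
  · intro hlower x hx φ hφ
    refine exists_seq_tendsto_of_frequently_inter_nonempty (fun n => hAc (φ n)) fun U hU hxU => ?_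
    have hev : ∀ᶠ n in atTop, (U ∩ A n).Nonempty :=
      eventually_atTop.2 (hlower U hU ⟨x, hxU, hx⟩)
    exact (hφ.tendsto_atTop.eventually hev).frequently
  · rintro hseq U hU ⟨x, hxU, hx⟩
    exact eventually_atTop.mp <|
      eventually_inter_nonempty_of_forall_strictMono (hseq x hx) (hU.mem_nhds hxU)

/-- In a Fréchet–Urysohn space, a sequence of nonempty closed sets converges to a nonempty
closed set `A∞` in the lower Vietoris sense iff for every `x∞ ∈ A∞` and every strictly
increasing `φ` there are a sequence converging to `x∞` and a strictly increasing `ξ` with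
`x n ∈ A (φ (ξ n))` for all `n`. -/
theorem lowerVietoris_convergence_iff_frechetUrysohn
    {X : Type*} [TopologicalSpace X] [FrechetUrysohnSpace X]
    (A : ℕ → Set X) (Ainf : Set X)
    (hA : ∀ n, (A n).Nonempty) (hAc : ∀ n, IsClosed (A n))
    (hinf : Ainf.Nonempty) (hinfc : IsClosed Ainf) :
    (∀ U : Set X, IsOpen U → (U ∩ Ainf).Nonempty →
      ∃ N : ℕ, ∀ n, N ≤ n → (U ∩ A n).Nonempty) ↔
    (∀ x ∈ Ainf, ∀ φ : ℕ → ℕ, StrictMono φ →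
      ∃ (x' : ℕ → X) (ξ : ℕ → ℕ), StrictMono ξ ∧
        Filter.Tendsto x' Filter.atTop (nhds x) ∧
        ∀ n : ℕ, x' n ∈ A (φ (ξ n))) :=
  lowerVietoris_convergence_iff_frechetUrysohn_general A Ainf hAc
end

section
/- In the space S_min, the point ∞∞ belongs to the closure of the set D = {(a, b) | a, b ∈ ℕ} of doubly finite points, but no sequence of points of D converges to ∞∞. Consequently, S_min is not a Fréchet–Urysohn space. -/
/-- The topology of the space `S_min` on `Option (ℕ × Option ℕ)`, where `none` is the
point `∞∞`, `some (a, none)` is `(a, ∞)` and `some (a, some b)` is `(a, b)`.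
A set `U` is open iff: whenever `(a, ∞) ∈ U` there is `b₀` with `(a, b) ∈ U` for all
`b ≥ b₀`, and whenever `∞∞ ∈ U` there are `a₀` and `ℓ : ℕ → ℕ` such that for all
`a ≥ a₀` one has `(a, ∞) ∈ U` and `(a, b) ∈ U` for all `b ≥ ℓ a`. -/
def SminTop : TopologicalSpace (Option (ℕ × Option ℕ)) where
  IsOpen U :=
    (∀ a : ℕ, some (a, none) ∈ U → ∃ b₀ : ℕ, ∀ b : ℕ, b₀ ≤ b → some (a, some b) ∈ U) ∧
    (none ∈ U → ∃ (a₀ : ℕ) (ℓ : ℕ → ℕ), ∀ a : ℕ, a₀ ≤ a →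
      some (a, none) ∈ U ∧ ∀ b : ℕ, ℓ a ≤ b → some (a, some b) ∈ U)
  isOpen_univ :=
    ⟨fun _ _ => ⟨0, fun _ _ => trivial⟩,
     fun _ => ⟨0, fun _ => 0, fun _ _ => ⟨trivial, fun _ _ => trivial⟩⟩⟩
  isOpen_inter := by
    intro U V hU hV
    constructor
    · intro a ha
      obtain ⟨b₁, h₁⟩ := hU.1 a ha.1
      obtain ⟨b₂, h₂⟩ := hV.1 a ha.2
      exact ⟨max b₁ b₂, fun b hb =>
        ⟨h₁ b (le_trans (le_max_left _ _) hb), h₂ b (le_trans (le_max_right _ _) hb)⟩⟩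
    · intro hnone
      obtain ⟨a₁, ℓ₁, h₁⟩ := hU.2 hnone.1
      obtain ⟨a₂, ℓ₂, h₂⟩ := hV.2 hnone.2
      refine ⟨max a₁ a₂, fun a => max (ℓ₁ a) (ℓ₂ a), fun a ha => ?_⟩
      have t₁ := h₁ a (le_trans (le_max_left _ _) ha)
      have t₂ := h₂ a (le_trans (le_max_right _ _) ha)
      exact ⟨⟨t₁.1, t₂.1⟩, fun b hb =>
        ⟨t₁.2 b (le_trans (le_max_left _ _) hb), t₂.2 b (le_trans (le_max_right _ _) hb)⟩⟩
  isOpen_sUnion := by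
    intro S hS
    constructor
    · intro a ha
      obtain ⟨U, hU, haU⟩ := ha
      obtain ⟨b₀, hb⟩ := (hS U hU).1 a haU
      exact ⟨b₀, fun b hb' => ⟨U, hU, hb b hb'⟩⟩
    · intro hnone
      obtain ⟨U, hU, hnU⟩ := hnone
      obtain ⟨a₀, ℓ, h⟩ := (hS U hU).2 hnU
      exact ⟨a₀, ℓ, fun a ha =>
        ⟨⟨U, hU, (h a ha).1⟩, fun b hb => ⟨U, hU, (h a ha).2 b hb⟩⟩⟩


/-!
Every open neighbourhood of `∞∞` contains a tail of every column from some column on, so `∞∞`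
lies in the closure of the doubly finite points. A sequence `(aₙ, bₙ)` of doubly finite points
converging to `∞∞` must eventually leave every column, since the points with first coordinate
`≥ A` form an open set; so each column holds only finitely many terms, and choosing `ℓ A` above
their second coordinates gives an open neighbourhood of `∞∞` that contains no term at all.
-/

section

open Filter Topology

theorem Nat.exists_bound_of_tendsto_atTop {a : ℕ → ℕ} (ha : Tendsto a atTop atTop)
    (b : ℕ → ℕ) : ∃ ℓ : ℕ → ℕ, ∀ n, b n < ℓ (a n) := by
  have hN : ∀ A, ∃ N, ∀ n ≥ N, A < a n := fun A =>
    eventually_atTop.mp (ha.eventually_gt_atTop A)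
  choose N hN using hN
  refine ⟨fun A => (Finset.range (N A)).sup b + 1, fun n => Nat.lt_succ_of_le ?_⟩
  have hn : n < N (a n) := not_le.mp fun h => lt_irrefl _ (hN (a n) n h)
  exact Finset.le_sup (Finset.mem_range.mpr hn)

namespace Smin

theorem isOpen_setOf_le_fst (A : ℕ) :
    IsOpen[SminTop] {u : Option (ℕ × Option ℕ) | ∀ a c, u = some (a, c) → A ≤ a} := by
  refine ⟨fun a ha => ⟨0, fun b _ => ?_⟩, fun _ => ⟨A, fun _ => 0, fun a hA => ?_⟩⟩
  · simpa using ha a none rfl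
  · simpa using hA

theorem isOpen_setOf_le_snd (ℓ : ℕ → ℕ) :
    IsOpen[SminTop] {u : Option (ℕ × Option ℕ) | ∀ a b, u = some (a, some b) → ℓ a ≤ b} := by
  refine ⟨fun a _ => ⟨ℓ a, fun b hb => ?_⟩,
    fun _ => ⟨0, ℓ, fun a _ => ⟨by simp, fun b hb => ?_⟩⟩⟩ <;> simpa using hb

theorem none_mem_closure_doublyFinite :
    none ∈ closure[SminTop] {u : Option (ℕ × Option ℕ) | ∃ a b : ℕ, u = some (a, some b)} := by
  let _ := SminTop
  refine mem_closure_iff.mpr fun U hU hnone => ?_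
  obtain ⟨a₀, ℓ, hU⟩ := hU.2 hnone
  exact ⟨_, (hU a₀ le_rfl).2 _ le_rfl, a₀, ℓ a₀, rfl⟩

theorem tendsto_fst_atTop {a b : ℕ → ℕ}
    (h : Tendsto (fun n => some (a n, some (b n))) atTop (@nhds _ SminTop none)) :
    Tendsto a atTop atTop := by
  let _ := SminTop
  exact tendsto_atTop.mpr fun A =>
    (h.eventually_mem ((isOpen_setOf_le_fst A).mem_nhds (by simp))).mono fun _ hn => hn _ _ rfl

theorem not_tendsto_none (a b : ℕ → ℕ) :
    ¬ Tendsto (fun n => some (a n, some (b n))) atTop (@nhds _ SminTop none) := by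
  let _ := SminTop
  intro h
  obtain ⟨ℓ, hℓ⟩ := Nat.exists_bound_of_tendsto_atTop (tendsto_fst_atTop h) b
  obtain ⟨n, hn⟩ := (h.eventually_mem ((isOpen_setOf_le_snd ℓ).mem_nhds (by simp))).exists
  exact (hℓ n).not_ge (hn _ _ rfl)

end Smin

end

/-- In `S_min`, the point `∞∞` is in the closure of the set of doubly finite points, but
is not the limit of any sequence of doubly finite points; hence `S_min` is not a
Fréchet–Urysohn space. -/
theorem smin_not_frechetUrysohn :
    (none : Option (ℕ × Option ℕ)) ∈
      @closure (Option (ℕ × Option ℕ)) SminTop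
        {u : Option (ℕ × Option ℕ) | ∃ a b : ℕ, u = some (a, some b)} ∧
    (¬ ∃ x : ℕ → Option (ℕ × Option ℕ),
      (∀ n, x n ∈ {u : Option (ℕ × Option ℕ) | ∃ a b : ℕ, u = some (a, some b)}) ∧
      Filter.Tendsto x Filter.atTop
        (@nhds (Option (ℕ × Option ℕ)) SminTop none)) ∧
    ¬ @FrechetUrysohnSpace (Option (ℕ × Option ℕ)) SminTop := by
  have no_seq : ¬ ∃ x : ℕ → Option (ℕ × Option ℕ),
      (∀ n, x n ∈ {u : Option (ℕ × Option ℕ) | ∃ a b : ℕ, u = some (a, some b)}) ∧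
      Filter.Tendsto x Filter.atTop (@nhds _ SminTop none) := by
    rintro ⟨x, hx, hlim⟩
    choose a b hab using hx
    rw [funext hab] at hlim
    exact Smin.not_tendsto_none a b hlim
  have hclosure := Smin.none_mem_closure_doublyFinite
  let _ := SminTop
  exact ⟨hclosure, no_seq, fun _ => no_seq (mem_closure_iff_seq_limit.mp hclosure)⟩
end
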